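/- (Half-duplex region is contained in the full-duplex region.) If d1 ≥ 0, d2 ≥ 0 and there exists α ∈ [0,1] with d1 ≤ α·d1max and d2 ≤ (1−α)·d2max, then d1 ≤ d1max, d2 ≤ d2max, and d1 + d2 ≤ d_sum. -/

import Mathlib

/-!
Each single-link maximum lies below `d_sum`: splitting `Ψ_{R11}` along `Ψ_{R12}` (resp. `Ψ_{T22}`
along `Ψ_{T12}`) bounds `L_{R1}·|Ψ_{R11}|` (resp. `L_{T2}·|Ψ_{T22}|`) by the part outside the
shared set plus the shared part, and the latter is dominated by the `max` term. A half-duplex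
pair is a time-sharing (convex) combination of the two single-link maxima, so it stays below
`d_sum` as well.
-/

open MeasureTheory Set

/-- Real-valued Lebesgue measure of a set of reals. -/
noncomputable def μr (S : Set ℝ) : ℝ := (volume S).toReal

lemma μr_nonneg (S : Set ℝ) : 0 ≤ μr S := ENNReal.toReal_nonneg

lemma μr_le_μr_sdiff_add (S : Set ℝ) {T : Set ℝ} (hT : T ⊆ Icc (-1) 1) :
    μr S ≤ μr (S \ T) + μr T := by
  have hTfin : volume T ≠ ⊤ := measure_ne_top_of_subset hT measure_Icc_lt_top.ne
  have := le_measureReal_sdiff (μ := volume) (s₁ := S) hTfin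
  simp only [μr, ← measureReal_def] at this ⊢
  linarith

lemma mul_μr_le_mul_μr_sdiff_add {L : ℝ} (hL : 0 ≤ L) (S : Set ℝ) {T : Set ℝ}
    (hT : T ⊆ Icc (-1) 1) : L * μr S ≤ L * μr (S \ T) + L * μr T := by
  rw [← mul_add]
  exact mul_le_mul_of_nonneg_left (μr_le_μr_sdiff_add S hT) hL

lemma two_mul_min_mul_μr_nonneg {L L' : ℝ} (hL : 0 ≤ L) (hL' : 0 ≤ L') (S S' : Set ℝ) :
    0 ≤ 2 * min (L * μr S) (L' * μr S') :=
  mul_nonneg zero_le_two (le_min (mul_nonneg hL (μr_nonneg S)) (mul_nonneg hL' (μr_nonneg S')))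

lemma add_le_of_le_mul_of_le_one_sub_mul {R : Type*} [Field R] [LinearOrder R]
    [IsStrictOrderedRing R] {a b c x y α : R} (hα0 : 0 ≤ α) (hα1 : α ≤ 1)
    (ha : a ≤ c) (hb : b ≤ c) (hx : x ≤ α * a) (hy : y ≤ (1 - α) * b) : x + y ≤ c := by
  nlinarith [mul_le_mul_of_nonneg_left ha hα0, mul_le_mul_of_nonneg_left hb (sub_nonneg.2 hα1)]

theorem half_duplex_in_full_duplex_general
    (L_T1 L_R1 L_T2 L_R2 : ℝ)
    (hLT1 : 0 ≤ L_T1) (hLR1 : 0 ≤ L_R1) (hLT2 : 0 ≤ L_T2) (hLR2 : 0 ≤ L_R2)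
    (ΨT11 ΨT12 ΨT22 ΨR11 ΨR12 ΨR22 : Set ℝ)
    (hsT12 : ΨT12 ⊆ Icc (-1) 1)
    (hsR12 : ΨR12 ⊆ Icc (-1) 1)
    (d1max d2max dsum d1 d2 : ℝ)
    (hd1max : d1max = 2 * min (L_T1 * μr ΨT11) (L_R1 * μr ΨR11))
    (hd2max : d2max = 2 * min (L_T2 * μr ΨT22) (L_R2 * μr ΨR22))
    (hdsum : dsum = 2 * L_T2 * μr (ΨT22 \ ΨT12) + 2 * L_R1 * μr (ΨR11 \ ΨR12)
        + 2 * max (L_T2 * μr ΨT12) (L_R1 * μr ΨR12))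
    (hα : ∃ α : ℝ, 0 ≤ α ∧ α ≤ 1 ∧ d1 ≤ α * d1max ∧ d2 ≤ (1 - α) * d2max)
    :
    d1 ≤ d1max ∧ d2 ≤ d2max ∧ d1 + d2 ≤ dsum := by
  obtain ⟨α, hα0, hα1, hd1α, hd2α⟩ := hα
  have h1max : 0 ≤ d1max := hd1max ▸ two_mul_min_mul_μr_nonneg hLT1 hLR1 ΨT11 ΨR11
  have h2max : 0 ≤ d2max := hd2max ▸ two_mul_min_mul_μr_nonneg hLT2 hLR2 ΨT22 ΨR22
  have hsplitR := mul_μr_le_mul_μr_sdiff_add hLR1 ΨR11 hsR12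
  have hsplitT := mul_μr_le_mul_μr_sdiff_add hLT2 ΨT22 hsT12
  have h1sum : d1max ≤ dsum := by
    rw [hd1max, hdsum]
    linarith [min_le_right (L_T1 * μr ΨT11) (L_R1 * μr ΨR11),
      le_max_right (L_T2 * μr ΨT12) (L_R1 * μr ΨR12), mul_nonneg hLT2 (μr_nonneg (ΨT22 \ ΨT12))]
  have h2sum : d2max ≤ dsum := by
    rw [hd2max, hdsum]
    linarith [min_le_left (L_T2 * μr ΨT22) (L_R2 * μr ΨR22),
      le_max_left (L_T2 * μr ΨT12) (L_R1 * μr ΨR12), mul_nonneg hLR1 (μr_nonneg (ΨR11 \ ΨR12))]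
  exact ⟨hd1α.trans (mul_le_of_le_one_left h1max hα1),
    hd2α.trans (mul_le_of_le_one_left h2max (sub_le_self 1 hα0)),
    add_le_of_le_mul_of_le_one_sub_mul hα0 hα1 h1sum h2sum hd1α hd2α⟩

theorem half_duplex_in_full_duplex
    (L_T1 L_R1 L_T2 L_R2 : ℝ)
    (hLT1 : 0 ≤ L_T1) (hLR1 : 0 ≤ L_R1) (hLT2 : 0 ≤ L_T2) (hLR2 : 0 ≤ L_R2)
    (ΨT11 ΨT12 ΨT22 ΨR11 ΨR12 ΨR22 : Set ℝ)
    (hmT11 : MeasurableSet ΨT11) (hmT12 : MeasurableSet ΨT12)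
    (hmT22 : MeasurableSet ΨT22) (hmR11 : MeasurableSet ΨR11)
    (hmR12 : MeasurableSet ΨR12) (hmR22 : MeasurableSet ΨR22)
    (hsT11 : ΨT11 ⊆ Icc (-1) 1) (hsT12 : ΨT12 ⊆ Icc (-1) 1)
    (hsT22 : ΨT22 ⊆ Icc (-1) 1) (hsR11 : ΨR11 ⊆ Icc (-1) 1)
    (hsR12 : ΨR12 ⊆ Icc (-1) 1) (hsR22 : ΨR22 ⊆ Icc (-1) 1)
    (d1max d2max dsum d1 d2 : ℝ)
    (hd1max : d1max = 2 * min (L_T1 * μr ΨT11) (L_R1 * μr ΨR11))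
    (hd2max : d2max = 2 * min (L_T2 * μr ΨT22) (L_R2 * μr ΨR22))
    (hdsum : dsum = 2 * L_T2 * μr (ΨT22 \ ΨT12) + 2 * L_R1 * μr (ΨR11 \ ΨR12)
        + 2 * max (L_T2 * μr ΨT12) (L_R1 * μr ΨR12))
    (hd1 : 0 ≤ d1) (hd2 : 0 ≤ d2)
    (hα : ∃ α : ℝ, 0 ≤ α ∧ α ≤ 1 ∧ d1 ≤ α * d1max ∧ d2 ≤ (1 - α) * d2max)
    :
    d1 ≤ d1max ∧ d2 ≤ d2max ∧ d1 + d2 ≤ dsum :=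
  half_duplex_in_full_duplex_general L_T1 L_R1 L_T2 L_R2 hLT1 hLR1 hLT2 hLR2 ΨT11 ΨT12 ΨT22 ΨR11
    ΨR12 ΨR22 hsT12 hsR12 d1max d2max dsum d1 d2 hd1max hd2max hdsum hα
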